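/- Let X be a compact metric space, φ : ℝ × X → X a continuous flow on X, and F : X → ℝ a continuous function with F ≥ 0; set Z = F⁻¹({0}). Let x ∈ X be such that ∫₀^∞ F(φ(t,x)) dt < ∞. Then the distance from φ(t,x) to the set Z tends to 0 as t → ∞. -/

import Mathlib

/-!
If `φ(t, x)` were at distance `≥ ε` from `Z = F⁻¹'{0}` at arbitrarily late times `t`, then,
since on a compact space the flow moves all points uniformly slowly in short time, the orbit
would stay at distance `≥ ε / 2` from `Z` during `[t, t + τ]` for a fixed `τ > 0`. On that
compact shell `|F| ≥ δ > 0`, so each such visit costs `∫ |F| ≥ δ τ`, which is impossible once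
the tail of the convergent integral is smaller than `δ τ`.
-/

open MeasureTheory Set Filter Topology

theorem MeasureTheory.IntegrableOn.tendsto_intervalIntegral_add_atTop_zero
    {E : Type*} [NormedAddCommGroup E] [NormedSpace ℝ E] [CompleteSpace E]
    {f : ℝ → E} {a : ℝ} (hf : IntegrableOn f (Ioi a)) (τ : ℝ) :
    Tendsto (fun t => ∫ s in t..t + τ, f s) atTop (𝓝 0) := by
  have hlim : Tendsto (fun b => ∫ s in a..b, f s) atTop (𝓝 (∫ s in Ioi a, f s)) :=
    intervalIntegral_tendsto_integral_Ioi a hf tendsto_id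
  have hdiff : Tendsto (fun t => (∫ s in a..t + τ, f s) - ∫ s in a..t, f s) atTop (𝓝 0) := by
    simpa using (hlim.comp (tendsto_atTop_add_const_right _ τ tendsto_id)).sub hlim
  refine hdiff.congr' ?_
  filter_upwards [eventually_ge_atTop a, eventually_ge_atTop (a - τ)] with t ht ht'
  have hfab : ∀ b, a ≤ b → IntervalIntegrable f volume a b := fun b hb =>
    (intervalIntegrable_iff_integrableOn_Ioc_of_le hb).2 (hf.mono_set Ioc_subset_Ioi_self)
  exact intervalIntegral.integral_interval_sub_left (hfab _ (by linarith)) (hfab t ht)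

theorem exists_pos_forall_Icc_dist_lt_of_continuous
    {X : Type*} [PseudoMetricSpace X] [CompactSpace X]
    {φ : ℝ × X → X} (hφ : Continuous φ) (hφ0 : ∀ x, φ (0, x) = x) {ε : ℝ} (hε : 0 < ε) :
    ∃ τ > 0, ∀ s ∈ Icc 0 τ, ∀ y, dist (φ (s, y)) y < ε := by
  have hunif := Metric.tendstoUniformly_iff.1
    (Continuous.tendstoUniformly (fun s y => φ (s, y)) hφ 0) ε hε
  obtain ⟨τ, hτ, hball⟩ := Metric.eventually_nhds_iff.1 hunif
  refine ⟨τ / 2, half_pos hτ, fun s hs y => ?_⟩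
  have := hball (show dist s 0 < τ by
    rw [Real.dist_0_eq_abs, abs_of_nonneg hs.1]; linarith [hs.2]) y
  rwa [hφ0, dist_comm] at this

theorem exists_pos_le_norm_of_le_infDist_zero_set
    {X : Type*} [PseudoMetricSpace X] [CompactSpace X]
    {E : Type*} [NormedAddCommGroup E] {F : X → E} (hF : Continuous F) {r : ℝ} (hr : 0 < r) :
    ∃ δ > 0, ∀ y, r ≤ Metric.infDist y (F ⁻¹' {0}) → δ ≤ ‖F y‖ := by
  have hshell : IsCompact {y | r ≤ Metric.infDist y (F ⁻¹' {0})} :=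
    (isClosed_le continuous_const (Metric.continuous_infDist_pt _)).isCompact
  refine hshell.exists_forall_le' hF.norm.continuousOn fun y hy => norm_pos_iff.2 fun hy0 => ?_
  have hy' : r ≤ Metric.infDist y (F ⁻¹' {0}) := hy
  rw [Metric.infDist_zero_of_mem (s := F ⁻¹' {0}) hy0] at hy'
  exact hr.not_ge hy'

theorem tendsto_infDist_zero_set_of_integrable_general
    {X : Type*} [MetricSpace X] [CompactSpace X]
    (φ : ℝ × X → X) (hφ : Continuous φ)
    (hφ0 : ∀ x : X, φ (0, x) = x)
    (hφadd : ∀ (s t : ℝ) (x : X), φ (s, φ (t, x)) = φ (s + t, x))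
    (F : X → ℝ) (hF : Continuous F)
    (x : X)
    (hint : IntegrableOn (fun t : ℝ => F (φ (t, x))) (Ici (0 : ℝ))) :
    Tendsto (fun t : ℝ => Metric.infDist (φ (t, x)) (F ⁻¹' {0})) atTop (nhds 0) := by
  refine Metric.tendsto_nhds.2 fun ε hε => ?_
  obtain ⟨δ, hδ, hFδ⟩ := exists_pos_le_norm_of_le_infDist_zero_set hF (half_pos hε)
  obtain ⟨τ, hτ, hmove⟩ := exists_pos_forall_Icc_dist_lt_of_continuous hφ hφ0 (half_pos hε)
  have hsmall := (IntegrableOn.tendsto_intervalIntegral_add_atTop_zero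
    (hint.mono_set Ioi_subset_Ici_self).norm τ).eventually (gt_mem_nhds (mul_pos hτ hδ))
  filter_upwards [hsmall] with t ht
  rw [Real.dist_eq, sub_zero, abs_of_nonneg Metric.infDist_nonneg]
  by_contra! hfar
  have hshell : ∀ s ∈ Icc t (t + τ), δ ≤ ‖F (φ (s, x))‖ := fun s hs => by
    refine hFδ _ ?_
    have hclose := hmove (s - t) ⟨by linarith [hs.1], by linarith [hs.2]⟩ (φ (t, x))
    rw [hφadd, sub_add_cancel, dist_comm] at hclose
    linarith [Metric.infDist_le_infDist_add_dist (x := φ (t, x)) (y := φ (s, x)) (s := F ⁻¹' {0})]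
  have horbit : Continuous fun s => ‖F (φ (s, x))‖ :=
    (hF.comp (hφ.comp (continuous_id.prodMk continuous_const))).norm
  have hcost : τ * δ ≤ ∫ s in t..t + τ, ‖F (φ (s, x))‖ := by
    simpa using intervalIntegral.integral_mono_on (by linarith) intervalIntegrable_const
      (horbit.intervalIntegrable (μ := volume) _ _) hshell
  linarith

/-- On a compact metric space, if `F ≥ 0` is continuous with zero set `Z` and the
integral `∫₀^∞ F(φ(t,x)) dt` is finite for a continuous flow `φ`, then the distance
from `φ(t,x)` to `Z` tends to `0` as `t → ∞`. -/
theorem tendsto_infDist_zero_set_of_integrable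
    {X : Type*} [MetricSpace X] [CompactSpace X]
    (φ : ℝ × X → X) (hφ : Continuous φ)
    (hφ0 : ∀ x : X, φ (0, x) = x)
    (hφadd : ∀ (s t : ℝ) (x : X), φ (s, φ (t, x)) = φ (s + t, x))
    (F : X → ℝ) (hF : Continuous F) (hF0 : ∀ z : X, 0 ≤ F z)
    (x : X)
    (hint : IntegrableOn (fun t : ℝ => F (φ (t, x))) (Ici (0 : ℝ))) :
    Tendsto (fun t : ℝ => Metric.infDist (φ (t, x)) (F ⁻¹' {0})) atTop (nhds 0) :=
  tendsto_infDist_zero_set_of_integrable_general φ hφ hφ0 hφadd F hF x hint
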